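/- Let h(y) = -f(y)·G(y)^{1-ρ} where ρ ∈ (0,1), f < 0 non-increasing on (0,∞), and G(y) = ∫_y^∞ dt/(-f(t)) < ∞. Then ∫_y^∞ 1/h(t) dt = G(y)^ρ/ρ for all y > 0; in particular 1/h is integrable at +∞. Moreover, if h is non-decreasing on [y₀, ∞) for some y₀, then y/h(y) → 0 as y → ∞. -/

import Mathlib

open MeasureTheory Set Filter Topology Real

/-! Since `G' = -1 / (-f)`, the function `-G ^ ρ / ρ` is an antiderivative of `1 / h`; as a tail
of a convergent integral, `G` vanishes at infinity, which gives the integral of `1 / h`.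
For the growth statement, monotonicity of `h` gives `(y / 2) / h y ≤ ∫_{y/2}^y 1 / h`, which is
bounded by a tail of the convergent integral of `1 / h`. -/

theorem tendsto_setIntegral_Ioi_atTop_zero {E : Type*} [NormedAddCommGroup E] [NormedSpace ℝ E]
    {μ : Measure ℝ} {g : ℝ → E} {a : ℝ} (hg : IntegrableOn g (Ioi a) μ) :
    Tendsto (fun t => ∫ x in Ioi t, g x ∂μ) atTop (𝓝 0) := by
  have := tendsto_setIntegral_of_antitone (fun t => measurableSet_Ioi)
    (fun _ _ hst => Ioi_subset_Ioi hst) ⟨a, hg⟩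
  rwa [iInter_eq_empty_iff.2 fun x => ⟨x, self_notMem_Ioi⟩, setIntegral_empty] at this

theorem hasDerivAt_neg_rpow_div_self {G : ℝ → ℝ} {g ρ x : ℝ} (hG : HasDerivAt G (-g) x)
    (hGx : 0 < G x) (hρ : ρ ≠ 0) :
    HasDerivAt (fun t => -(G t ^ ρ / ρ)) (g / G x ^ (1 - ρ)) x := by
  refine (((hG.rpow_const (p := ρ) (Or.inl hGx.ne')).div_const ρ).neg).congr_deriv ?_
  rw [show ρ - 1 = -(1 - ρ) by ring, rpow_neg hGx.le]
  field_simp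

theorem div_le_setIntegral_Ioi_inv_of_monotoneOn {h : ℝ → ℝ} {y₀ a b : ℝ}
    (hmono : MonotoneOn h (Ici y₀)) (hpos : ∀ y ≥ y₀, 0 < h y)
    (hint : IntegrableOn (fun t => 1 / h t) (Ioi y₀)) (ha : y₀ ≤ a) (hab : a ≤ b) :
    (b - a) / h b ≤ ∫ t in Ioi a, 1 / h t := by
  have hint' : IntegrableOn (fun t => 1 / h t) (Ioi a) := hint.mono_set (Ioi_subset_Ioi ha)
  have hvol : volume.real (Ioc a b) = b - a := by
    rw [measureReal_def, volume_Ioc, ENNReal.toReal_ofReal (by linarith)]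
  calc (b - a) / h b = 1 / h b * volume.real (Ioc a b) := by rw [hvol]; ring
    _ ≤ ∫ t in Ioc a b, 1 / h t := by
      refine setIntegral_ge_of_const_le_real measurableSet_Ioc measure_Ioc_lt_top.ne
        (fun x hx => ?_) (hint'.mono_set Ioc_subset_Ioi_self)
      have hx₀ : y₀ ≤ x := ha.trans hx.1.le
      exact one_div_le_one_div_of_le (hpos x hx₀) (hmono hx₀ (ha.trans hab) hx.2)
    _ ≤ ∫ t in Ioi a, 1 / h t := by
      refine setIntegral_mono_set hint' ?_ Ioc_subset_Ioi_self.eventuallyLE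
      filter_upwards [ae_restrict_mem measurableSet_Ioi] with x hx
      exact one_div_nonneg.2 (hpos x (ha.trans hx.le)).le

theorem tendsto_div_atTop_zero_of_monotoneOn_of_integrableOn_inv {h : ℝ → ℝ} {y₀ : ℝ}
    (hmono : MonotoneOn h (Ici y₀)) (hpos : ∀ y ≥ y₀, 0 < h y)
    (hint : IntegrableOn (fun t => 1 / h t) (Ioi y₀)) :
    Tendsto (fun y => y / h y) atTop (𝓝 0) := by
  have htail : Tendsto (fun y => 2 * ∫ t in Ioi (y / 2), 1 / h t) atTop (𝓝 0) := by
    simpa using ((tendsto_setIntegral_Ioi_atTop_zero hint).comp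
      (tendsto_id.atTop_div_const two_pos)).const_mul 2
  refine tendsto_of_tendsto_of_tendsto_of_le_of_le' tendsto_const_nhds htail ?_ ?_
  · filter_upwards [eventually_ge_atTop (max y₀ 0)] with y hy
    exact div_nonneg (le_of_max_le_right hy) (hpos y (le_of_max_le_left hy)).le
  · filter_upwards [eventually_ge_atTop (max (2 * y₀) 0)] with y hy
    have hy₀ : y₀ ≤ y / 2 := by linarith [le_max_left (2 * y₀) 0]
    have hy : y / 2 ≤ y := by linarith [le_max_right (2 * y₀) 0]
    have := div_le_setIntegral_Ioi_inv_of_monotoneOn hmono hpos hint hy₀ hy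
    calc y / h y = 2 * ((y - y / 2) / h y) := by ring
      _ ≤ 2 * ∫ t in Ioi (y / 2), 1 / h t := by linarith

theorem stmt16_general (f G h : ℝ → ℝ) (ρ : ℝ) (hρ0 : 0 < ρ)
    (hf_neg : ∀ y > 0, f y < 0)
    (hint : ∀ y > 0, IntegrableOn (fun t => 1 / (-f t)) (Ioi y))
    (hG : ∀ y > 0, G y = ∫ t in Ioi y, 1 / (-f t))
    (hG_pos : ∀ y > 0, 0 < G y)
    (hG' : ∀ y > 0, HasDerivAt G (-(1 / (-f y))) y)
    (hh : ∀ y > 0, h y = (-f y) * G y ^ (1 - ρ)) :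
    (∀ y > 0, IntegrableOn (fun t => 1 / h t) (Ioi y)) ∧
    (∀ y > 0, (∫ t in Ioi y, 1 / h t) = G y ^ ρ / ρ) ∧
    (∀ y₀ > (0:ℝ), MonotoneOn h (Ici y₀) →
        Tendsto (fun y => y / h y) atTop (𝓝 0)) := by
  have hh_pos : ∀ y > 0, 0 < h y := fun y hy => by
    rw [hh y hy]
    exact mul_pos (neg_pos.2 (hf_neg y hy)) (rpow_pos_of_pos (hG_pos y hy) _)
  have hderiv : ∀ y > 0, HasDerivAt (fun t => -(G t ^ ρ / ρ)) (1 / h y) y := fun y hy => by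
    rw [hh y hy, ← div_div]
    exact hasDerivAt_neg_rpow_div_self (hG' y hy) (hG_pos y hy) hρ0.ne'
  have hG_tendsto : Tendsto G atTop (𝓝 0) :=
    (tendsto_setIntegral_Ioi_atTop_zero (hint 1 one_pos)).congr'
      (eventually_gt_atTop 0 |>.mono fun y hy => (hG y hy).symm)
  have hlim : Tendsto (fun t => -(G t ^ ρ / ρ)) atTop (𝓝 0) := by
    simpa [zero_rpow hρ0.ne'] using
      (((continuousAt_rpow_const 0 ρ (Or.inr hρ0.le)).tendsto.comp hG_tendsto).div_const ρ).neg
  have hderiv_Ici : ∀ y > 0, ∀ x ∈ Ici y, HasDerivAt (fun t => -(G t ^ ρ / ρ)) (1 / h x) x :=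
    fun y hy x hx => hderiv x (hy.trans_le hx)
  have hnonneg : ∀ y > 0, ∀ x ∈ Ioi y, 0 ≤ 1 / h x :=
    fun y hy x hx => one_div_nonneg.2 (hh_pos x (hy.trans hx)).le
  have hintegrable : ∀ y > 0, IntegrableOn (fun t => 1 / h t) (Ioi y) := fun y hy =>
    integrableOn_Ioi_deriv_of_nonneg' (hderiv_Ici y hy) (hnonneg y hy) hlim
  refine ⟨hintegrable, fun y hy => ?_, fun y₀ hy₀ hmono => ?_⟩
  · rw [integral_Ioi_of_hasDerivAt_of_nonneg' (hderiv_Ici y hy) (hnonneg y hy) hlim]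
    ring
  · exact tendsto_div_atTop_zero_of_monotoneOn_of_integrableOn_inv hmono
      (fun y hy => hh_pos y (hy₀.trans_le hy)) (hintegrable y₀ hy₀)

theorem stmt16 (f G h : ℝ → ℝ) (ρ : ℝ) (hρ0 : 0 < ρ) (hρ1 : ρ < 1)
    (hf_cont : ContinuousOn f (Ioi 0)) (hf_neg : ∀ y > 0, f y < 0)
    (hf_anti : AntitoneOn f (Ioi 0))
    (hint : ∀ y > 0, IntegrableOn (fun t => 1 / (-f t)) (Ioi y))
    (hG : ∀ y > 0, G y = ∫ t in Ioi y, 1 / (-f t))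
    (hG_pos : ∀ y > 0, 0 < G y)
    (hG' : ∀ y > 0, HasDerivAt G (-(1 / (-f y))) y)
    (hh : ∀ y > 0, h y = (-f y) * G y ^ (1 - ρ)) :
    (∀ y > 0, IntegrableOn (fun t => 1 / h t) (Ioi y)) ∧
    (∀ y > 0, (∫ t in Ioi y, 1 / h t) = G y ^ ρ / ρ) ∧
    (∀ y₀ > (0:ℝ), MonotoneOn h (Ici y₀) →
        Tendsto (fun y => y / h y) atTop (𝓝 0)) :=
  stmt16_general f G h ρ hρ0 hf_neg hint hG hG_pos hG' hh
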